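/- arXiv:2308.15454 — 2 statements merged into one kernel-verified Lean document; each statement's English description precedes it below -/
import Mathlib

section
/- Let V be a real inner product space with an algebraic curvature tensor R (satisfying the usual symmetries and the first Bianchi identity), and let k ≤ 0. Suppose the sectional curvature K(σ) = ⟨R(X,Y)Y,X⟩/|X∧Y|² satisfies K(σ) ≤ k for all 2-planes σ ⊂ V, and there is a hyperplane H ⊂ V such that K(σ) = k for every 2-plane σ ⊂ H. Then for all vectors X, Y ∈ H and every vector N orthogonal to H, one has ⟨R(X,Y)N, Z⟩ = 0 for all Z ∈ V, i.e. R(X,Y)N = 0. -/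
open RealInnerProductSpace

/-- An algebraic curvature tensor on an inner product space with sectional
curvature `≤ k ≤ 0`, equal to `k` on all 2-planes of a hyperplane `H`,
annihilates normal vectors: `R(X,Y)N = 0` for `X, Y ∈ H`, `N ⟂ H`. -/
theorem curvature_vanishes_on_normal
    {V : Type*} [NormedAddCommGroup V] [InnerProductSpace ℝ V]
    (R : V → V → V → V)
    (hlin₁ : ∀ Y Z, IsLinearMap ℝ fun X => R X Y Z)
    (hlin₂ : ∀ X Z, IsLinearMap ℝ fun Y => R X Y Z)
    (hlin₃ : ∀ X Y, IsLinearMap ℝ fun Z => R X Y Z)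
    (hskew₁ : ∀ X Y Z W, ⟪R X Y Z, W⟫ = -⟪R Y X Z, W⟫)
    (hskew₂ : ∀ X Y Z W, ⟪R X Y Z, W⟫ = -⟪R X Y W, Z⟫)
    (hsymm : ∀ X Y Z W, ⟪R X Y Z, W⟫ = ⟪R Z W X, Y⟫)
    (hbianchi : ∀ X Y Z, R X Y Z + R Y Z X + R Z X Y = 0)
    (k : ℝ) (hk : k ≤ 0)
    (hsec : ∀ X Y : V, LinearIndependent ℝ ![X, Y] →
      ⟪R X Y Y, X⟫ ≤ k * (⟪X, X⟫ * ⟪Y, Y⟫ - ⟪X, Y⟫ ^ 2))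
    (H : Submodule ℝ V) (u : V) (hu : u ≠ 0) (hH : H = (ℝ ∙ u)ᗮ)
    (hflat : ∀ X ∈ H, ∀ Y ∈ H, LinearIndependent ℝ ![X, Y] →
      ⟪R X Y Y, X⟫ = k * (⟪X, X⟫ * ⟪Y, Y⟫ - ⟪X, Y⟫ ^ 2)) :
    ∀ X ∈ H, ∀ Y ∈ H, ∀ N ∈ Hᗮ, (∀ Z : V, ⟪R X Y N, Z⟫ = 0) ∧ R X Y N = 0 := by
  -- basic consequences of the symmetries
  have hRZZ : ∀ X Y Z : V, ⟪R X Y Z, Z⟫ = 0 := by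
    intro X Y Z; have := hskew₂ X Y Z Z; linarith
  -- linearity rewrites
  have hadd₂ : ∀ X Y Y' Z : V, R X (Y + Y') Z = R X Y Z + R X Y' Z :=
    fun X Y Y' Z => (hlin₂ X Z).map_add Y Y'
  have hsmul₂ : ∀ (c : ℝ) (X Y Z : V), R X (c • Y) Z = c • R X Y Z :=
    fun c X Y Z => (hlin₂ X Z).map_smul c Y
  have hadd₃ : ∀ X Y Z Z' : V, R X Y (Z + Z') = R X Y Z + R X Y Z' :=
    fun X Y Z Z' => (hlin₃ X Y).map_add Z Z'
  have hsmul₃ : ∀ (c : ℝ) (X Y Z : V), R X Y (c • Z) = c • R X Y Z :=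
    fun c X Y Z => (hlin₃ X Y).map_smul c Z
  have hsmul₁ : ∀ (c : ℝ) (X Y Z : V), R (c • X) Y Z = c • R X Y Z :=
    fun c X Y Z => (hlin₁ Y Z).map_smul c X
  have hadd₁ : ∀ X X' Y Z : V, R (X + X') Y Z = R X Y Z + R X' Y Z :=
    fun X X' Y Z => (hlin₁ Y Z).map_add X X'
  -- degenerate pairs give equality (both sides zero)
  have hdeg : ∀ X W : V, ¬ LinearIndependent ℝ ![X, W] →
      ⟪R X W W, X⟫ = k * (⟪X, X⟫ * ⟪W, W⟫ - ⟪X, W⟫ ^ 2) := by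
    intro X W h
    rw [LinearIndependent.pair_iff] at h
    push_neg at h
    obtain ⟨s, t, hst, hne⟩ := h
    rcases eq_or_ne s 0 with hs | hs
    · have ht : t ≠ 0 := hne hs
      have hW : W = 0 := by
        have h2 : t • W = 0 := by simpa [hs] using hst
        simpa [ht] using h2
      have hR0 : R X 0 0 = 0 := by simpa using (hlin₂ X 0).map_zero
      rw [hW, hR0]
      simp
    · have hX : X = (-(t / s)) • W := by
        have h1 : s • X = -(t • W) := by
          rw [eq_neg_iff_add_eq_zero]; exact hst
        have h2 : X = s⁻¹ • -(t • W) := by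
          rw [← h1, ← smul_assoc, smul_eq_mul, inv_mul_cancel₀ hs, one_smul]
        rw [h2, smul_neg, smul_smul, ← neg_smul]
        congr 1
        field_simp
      rw [hX, hsmul₁]
      simp only [real_inner_smul_left, real_inner_smul_right]
      rw [hRZZ]
      ring
  have hle : ∀ X W : V, ⟪R X W W, X⟫ ≤ k * (⟪X, X⟫ * ⟪W, W⟫ - ⟪X, W⟫ ^ 2) := by
    intro X W
    by_cases h : LinearIndependent ℝ ![X, W]
    · exact hsec X W h
    · exact le_of_eq (hdeg X W h)
  have hfl : ∀ X ∈ H, ∀ W ∈ H, ⟪R X W W, X⟫ = k * (⟪X, X⟫ * ⟪W, W⟫ - ⟪X, W⟫ ^ 2) := by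
    intro X hX W hW
    by_cases h : LinearIndependent ℝ ![X, W]
    · exact hflat X hX W hW h
    · exact hdeg X W h
  -- key step: ⟪R A B N, A⟫ = 0 for A, B ∈ H, N ⟂ H
  have key : ∀ A ∈ H, ∀ B ∈ H, ∀ N ∈ Hᗮ, ⟪R A B N, A⟫ = 0 := by
    intro A hA B hB N hN
    have hAN : ⟪A, N⟫ = 0 := hN A hA
    have hBN : ⟪B, N⟫ = 0 := hN B hB
    have hNB : ⟪N, B⟫ = 0 := by rw [real_inner_comm]; exact hBN
    have hNA : ⟪N, A⟫ = 0 := by rw [real_inner_comm]; exact hAN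
    -- Bianchi: ⟪R A B N, A⟫ = ⟪R A N B, A⟫
    have hbi : ⟪R A B N, A⟫ = ⟪R A N B, A⟫ := by
      have h0 := congrArg (fun v => ⟪v, A⟫) (hbianchi A B N)
      simp only [inner_add_left, inner_zero_left] at h0
      have h1 := hRZZ B N A
      have h2 := hskew₁ N A B A
      linarith
    set b : ℝ := 2 * ⟪R A B N, A⟫ with hbdef
    set c : ℝ := ⟪R A N N, A⟫ - k * (⟪A, A⟫ * ⟪N, N⟫) with hcdef
    have hquad : ∀ t : ℝ, b * t + c * t ^ 2 ≤ 0 := by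
      intro t
      have h1 := hle A (B + t • N)
      have h0 := hfl A hA B hB
      simp only [hadd₂, hadd₃, hsmul₂, hsmul₃, inner_add_left, inner_add_right,
        real_inner_smul_left, real_inner_smul_right, smul_smul, hAN, hBN, hNB] at h1
      rw [← hbi] at h1
      show 2 * ⟪R A B N, A⟫ * t +
        (⟪R A N N, A⟫ - k * (⟪A, A⟫ * ⟪N, N⟫)) * t ^ 2 ≤ 0
      nlinarith [h0, h1]
    have hq1 := hquad 1
    have hqm1 := hquad (-1)
    have hb : b = 0 := by
      rcases eq_or_ne c 0 with hc | hc
      · rw [hc] at hq1 hqm1; linarith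
      · have hclt : c < 0 := lt_of_le_of_ne (by linarith) hc
        have ht := hquad (-(b / (2 * c)))
        have heq : b * -(b / (2 * c)) + c * (-(b / (2 * c))) ^ 2 = -(b ^ 2) / (4 * c) := by
          field_simp
          ring
        rw [heq] at ht
        have h2 : 0 * (4 * c) ≤ -(b ^ 2) :=
          (div_le_iff_of_neg (show 4 * c < 0 by linarith)).mp ht
        have hb2 : b ^ 2 = 0 := le_antisymm (by linarith) (sq_nonneg b)
        exact sq_eq_zero_iff.mp hb2
    have hfin : ⟪R A B N, A⟫ = b / 2 := by rw [hbdef]; ring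
    rw [hfin, hb]; norm_num
  -- polarization: full vanishing against H
  have key2 : ∀ A ∈ H, ∀ B ∈ H, ∀ C ∈ H, ∀ N ∈ Hᗮ, ⟪R A B N, C⟫ = 0 := by
    have alt13 : ∀ A ∈ H, ∀ B ∈ H, ∀ C ∈ H, ∀ N ∈ Hᗮ,
        ⟪R A B N, C⟫ = -⟪R C B N, A⟫ := by
      intro A hA B hB C hC N hN
      have h := key (A + C) (H.add_mem hA hC) B hB N hN
      rw [hadd₁] at h
      simp only [inner_add_left, inner_add_right] at h
      have h1 := key A hA B hB N hN
      have h2 := key C hC B hB N hN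
      linarith
    intro A hA B hB C hC N hN
    have e3 : ⟪R A B N, C⟫ - ⟪R A C N, B⟫ + ⟪R B C N, A⟫ = 0 := by
      have h0 := congrArg (fun v => ⟪v, C⟫) (hbianchi A B N)
      simp only [inner_add_left, inner_zero_left] at h0
      have h1 : ⟪R B N A, C⟫ = -⟪R A C N, B⟫ := by
        rw [hsymm B N A C]; exact hskew₂ A C B N
      have h2 : ⟪R N A B, C⟫ = ⟪R B C N, A⟫ := hsymm N A B C
      linarith
    have p1 := alt13 A hA C hC B hB N hN
    have p2 := alt13 B hB C hC A hA N hN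
    have p3 := alt13 C hC A hA B hB N hN
    have s1 := hskew₁ A C N B
    have s2 := hskew₁ B A N C
    linarith
  -- conclusion
  intro X hX Y hY N hN
  have hmain : ∀ Z : V, ⟪R X Y N, Z⟫ = 0 := by
    intro Z
    obtain ⟨y, hy, z, hz, hZ⟩ := (ℝ ∙ u).exists_add_mem_mem_orthogonal Z
    have hzH : z ∈ H := by rw [hH]; exact hz
    have hNspan : N ∈ (ℝ ∙ u) := by
      have horth : Hᗮ = (ℝ ∙ u) := by
        rw [hH]; exact Submodule.orthogonal_orthogonal _
      rwa [horth] at hN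
    obtain ⟨a, ha⟩ := Submodule.mem_span_singleton.mp hNspan
    obtain ⟨d, hd⟩ := Submodule.mem_span_singleton.mp hy
    rw [hZ, inner_add_right, key2 X hX Y hY z hzH N hN, ← ha, ← hd]
    rw [hsmul₃, real_inner_smul_left, real_inner_smul_right, hRZZ]
    ring
  refine ⟨hmain, ?_⟩
  have hz := hmain (R X Y N)
  exact inner_self_eq_zero.mp (by exact_mod_cast hz)
end

section
/- Let V be a real inner product space with an algebraic curvature tensor R, let k be a real number, and suppose K(σ) ≤ k for all 2-planes σ in V. If X, Y span a plane σ₀ with K(σ₀) = k, then for every vector N orthogonal to both X and Y one has ⟨R(X,Y)Y, N⟩ = 0. -/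
open RealInnerProductSpace

lemma quad_aux (b c : ℝ) (h : ∀ t : ℝ, c * t ^ 2 + 2 * b * t ≤ 0) : b = 0 := by
  rcases lt_or_ge c 0 with hc | hc
  · have h1 := h (-b / c)
    have hc' : c ≠ 0 := ne_of_lt hc
    have hval : c * (-b / c) ^ 2 + 2 * b * (-b / c) = -(b ^ 2) / c := by
      field_simp
      ring
    rw [hval] at h1
    have h2 : -(b ^ 2) ≥ 0 := by
      by_contra hcon
      push_neg at hcon
      have : -(b ^ 2) / c > 0 := div_pos_of_neg_of_neg hcon hc
      linarith
    nlinarith [sq_nonneg b]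
  · have h1 := h 1
    have h2 := h (-1)
    nlinarith

/-- If an algebraic curvature tensor has sectional curvature `≤ k` everywhere
and a plane `σ₀ = span{X, Y}` attains `K(σ₀) = k`, then `⟪R(X,Y)Y, N⟫ = 0`
for every `N` orthogonal to both `X` and `Y`. -/
theorem inner_curvature_normal_eq_zero
    {V : Type*} [NormedAddCommGroup V] [InnerProductSpace ℝ V]
    (R : V → V → V → V)
    (hlin₁ : ∀ Y Z, IsLinearMap ℝ fun X => R X Y Z)
    (hlin₂ : ∀ X Z, IsLinearMap ℝ fun Y => R X Y Z)
    (hlin₃ : ∀ X Y, IsLinearMap ℝ fun Z => R X Y Z)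
    (hskew₁ : ∀ X Y Z W, ⟪R X Y Z, W⟫ = -⟪R Y X Z, W⟫)
    (hskew₂ : ∀ X Y Z W, ⟪R X Y Z, W⟫ = -⟪R X Y W, Z⟫)
    (hsymm : ∀ X Y Z W, ⟪R X Y Z, W⟫ = ⟪R Z W X, Y⟫)
    (hbianchi : ∀ X Y Z, R X Y Z + R Y Z X + R Z X Y = 0)
    (k : ℝ)
    (hsec : ∀ X Y : V, LinearIndependent ℝ ![X, Y] →
      ⟪R X Y Y, X⟫ ≤ k * (⟪X, X⟫ * ⟪Y, Y⟫ - ⟪X, Y⟫ ^ 2))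
    (X Y : V) (hXY : LinearIndependent ℝ ![X, Y])
    (heq : ⟪R X Y Y, X⟫ = k * (⟪X, X⟫ * ⟪Y, Y⟫ - ⟪X, Y⟫ ^ 2))
    (N : V) (hNX : ⟪N, X⟫ = 0) (hNY : ⟪N, Y⟫ = 0) :
    ⟪R X Y Y, N⟫ = 0 := by
  by_cases hN : N = 0
  · simp [hN]
  have hNN : (0:ℝ) < ⟪N, N⟫ := by
    have h0 : ⟪N, N⟫ ≠ 0 := fun h => hN (inner_self_eq_zero.mp h)
    exact lt_of_le_of_ne real_inner_self_nonneg (Ne.symm h0)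
  have hXN : ⟪X, N⟫ = 0 := by rw [real_inner_comm]; exact hNX
  have hYN : ⟪Y, N⟫ = 0 := by rw [real_inner_comm]; exact hNY
  have hs : ⟪R N Y Y, X⟫ = ⟪R X Y Y, N⟫ := by
    rw [hsymm N Y Y X, hskew₁ Y X N Y, hskew₂ X Y N Y, neg_neg]
  have key : ∀ t : ℝ,
      (⟪R N Y Y, N⟫ - k * (⟪N, N⟫ * ⟪Y, Y⟫)) * t ^ 2 + 2 * ⟪R X Y Y, N⟫ * t ≤ 0 := by
    intro t
    have hli : LinearIndependent ℝ ![X + t • N, Y] := by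
      rw [LinearIndependent.pair_iff]
      intro a c hac
      have h1 : ⟪a • (X + t • N) + c • Y, N⟫ = a * t * ⟪N, N⟫ := by
        simp [inner_add_left, real_inner_smul_left, hXN, hYN]
        ring
      rw [hac, inner_zero_left] at h1
      have hat : a * t = 0 := by
        rcases mul_eq_zero.mp h1.symm with h | h
        · exact h
        · exact absurd h (ne_of_gt hNN)
      rw [smul_add, smul_smul, hat, zero_smul, add_zero] at hac
      exact LinearIndependent.pair_iff.mp hXY a c hac
    have hsec' := hsec (X + t • N) Y hli
    have hexp : ⟪R (X + t • N) Y Y, X + t • N⟫ =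
        ⟪R X Y Y, X⟫ + t * ⟪R X Y Y, N⟫ + t * ⟪R N Y Y, X⟫ + t ^ 2 * ⟪R N Y Y, N⟫ := by
      rw [(hlin₁ Y Y).map_add, (hlin₁ Y Y).map_smul]
      simp [inner_add_left, inner_add_right, real_inner_smul_left, real_inner_smul_right]
      ring
    have hXX : ⟪X + t • N, X + t • N⟫ = ⟪X, X⟫ + t ^ 2 * ⟪N, N⟫ := by
      simp only [inner_add_left, inner_add_right, real_inner_smul_left, real_inner_smul_right,
        hXN, hNX]
      ring
    have hXYi : ⟪X + t • N, Y⟫ = ⟪X, Y⟫ := by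
      simp [inner_add_left, real_inner_smul_left, hNY]
    rw [hexp, hXX, hXYi] at hsec'
    rw [hs] at hsec'
    nlinarith [hsec', heq]
  have := quad_aux ⟪R X Y Y, N⟫ (⟪R N Y Y, N⟫ - k * (⟪N, N⟫ * ⟪Y, Y⟫)) key
  exact this
end
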